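/- arXiv:2510.10855 — 3 statements merged into one kernel-verified Lean document; each statement's English description precedes it below -/
import Mathlib

section
/- There exists an absolute constant c > 0 such that for all integers x ≥ 1 and y ≥ 3, the number of positive integers m ≤ x all of whose prime factors divide y is strictly less than exp(c · log(max(x, y)) / log log y). -/
/-! Rankin's trick: for `σ > 0` the count is at most `x ^ σ * ∑ m ^ (-σ)` over the `m` whose
prime factors divide `y`, which is the Euler product `∏_{p ∣ y} (1 - p ^ (-σ))⁻¹`, and each
factor is at most `exp (1 / (σ log p))`. Take `σ = 1 / λ` with `λ = log log y`. The primes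
`p ≤ exp (λ / 2) = √(log y)` number at most `√(log y)` and contribute at most `λ / log 2` each;
a larger prime contributes `λ / log p ≤ 4 log p / λ`, and `∑_{p ∣ y} log p ≤ log y`. As
`λ² ≤ 16 √(log y)`, the exponent is `O ((log x + log y) / λ)`. -/

open Finset Real

namespace Nat

lemma mem_factoredNumbers_primeFactors {m n : ℕ} (hn : n ≠ 0) :
    m ∈ factoredNumbers n.primeFactors ↔ m ≠ 0 ∧ ∀ p, p.Prime → p ∣ m → p ∣ n := by
  simp only [mem_factoredNumbers_iff_forall_le, mem_primeFactors, ne_eq, hn, not_false_eq_true,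
    and_true]
  refine and_congr_right fun hm ↦ ⟨fun h p hp hpm ↦ (h p (le_of_dvd (by omega) hpm) hp hpm).2,
    fun h p _ hp hpm ↦ ⟨hp, h p hp hpm⟩⟩

lemma card_subtype_eq_card_filter_factoredNumbers (x : ℕ) {y : ℕ} (hy : y ≠ 0) :
    Nat.card {m : ℕ // 1 ≤ m ∧ m ≤ x ∧ ∀ p : ℕ, p.Prime → p ∣ m → p ∣ y} =
      #{m ∈ Iic x | m ∈ factoredNumbers y.primeFactors} := by
  rw [← Nat.card_eq_finsetCard]
  refine Nat.card_congr (Equiv.subtypeEquivRight fun m ↦ ?_)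
  rw [mem_filter, mem_Iic, mem_factoredNumbers_primeFactors hy, one_le_iff_ne_zero]
  tauto

lemma sum_log_primeFactors_le (n : ℕ) : ∑ p ∈ n.primeFactors, Real.log p ≤ Real.log n := by
  rcases eq_or_ne n 0 with rfl | hn
  · simp
  rw [← Real.log_prod fun p hp ↦ by exact_mod_cast (prime_of_mem_primeFactors hp).ne_zero,
    ← Nat.cast_prod]
  exact Real.log_le_log (by exact_mod_cast prod_pos fun p hp ↦ (prime_of_mem_primeFactors hp).pos)
    (by exact_mod_cast le_of_dvd (by omega) (prod_primeFactors_dvd n))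

theorem hasSum_rpow_neg_factoredNumbers (s : Finset ℕ) {σ : ℝ} (hσ : 0 < σ) :
    HasSum (fun m : factoredNumbers s ↦ (m : ℝ) ^ (-σ))
      (∏ p ∈ s with p.Prime, (1 - (p : ℝ) ^ (-σ))⁻¹) := by
  have hpow (p n : ℕ) : ((p ^ n : ℕ) : ℝ) ^ (-σ) = ((p : ℝ) ^ (-σ)) ^ n := by
    rw [Nat.cast_pow, ← rpow_natCast, ← rpow_natCast, ← rpow_mul (by positivity),
      ← rpow_mul (by positivity), mul_comm]
  have hlt {p : ℕ} (hp : p.Prime) : (p : ℝ) ^ (-σ) < 1 :=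
    rpow_lt_one_of_one_lt_of_neg (by exact_mod_cast hp.one_lt) (by linarith)
  have h := (EulerProduct.summable_and_hasSum_factoredNumbers_prod_filter_prime_tsum
    (f := fun m : ℕ ↦ (m : ℝ) ^ (-σ)) (by simp)
    (fun {m n} _ ↦ by rw [Nat.cast_mul, mul_rpow (by positivity) (by positivity)])
    (fun hp ↦ by
      simp only [hpow, norm_pow, Real.norm_of_nonneg (rpow_nonneg (Nat.cast_nonneg _) _)]
      exact summable_geometric_of_lt_one (by positivity) (hlt hp)) s).2
  rwa [prod_congr rfl fun p hp ↦ by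
    rw [funext (hpow p), tsum_geometric_of_lt_one (by positivity) (hlt (mem_filter.mp hp).2)]] at h

theorem card_factoredNumbers_le (s : Finset ℕ) {σ : ℝ} (hσ : 0 < σ) (x : ℕ) :
    (#{m ∈ Iic x | m ∈ factoredNumbers s} : ℝ) ≤
      x ^ σ * ∏ p ∈ s with p.Prime, (1 - (p : ℝ) ^ (-σ))⁻¹ := by
  set T := {m ∈ Iic x | m ∈ factoredNumbers s} with hT
  have hterm : ∀ m ∈ T, (1 : ℝ) ≤ x ^ σ * (m : ℝ) ^ (-σ) := fun m hm ↦ by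
    obtain ⟨hmx, hms⟩ := mem_filter.mp hm
    have hm0 : (0 : ℝ) < m := by
      exact_mod_cast pos_of_ne_zero (ne_zero_of_mem_factoredNumbers hms)
    rw [rpow_neg hm0.le, ← div_eq_mul_inv, one_le_div (by positivity)]
    exact rpow_le_rpow hm0.le (by exact_mod_cast mem_Iic.mp hmx) hσ.le
  have hsum : ∑ m ∈ T, (m : ℝ) ^ (-σ) ≤ ∏ p ∈ s with p.Prime, (1 - (p : ℝ) ^ (-σ))⁻¹ := by
    rw [hT, ← subtype_map (· ∈ factoredNumbers s), sum_map]
    exact sum_le_hasSum _ (fun _ _ ↦ by positivity) (hasSum_rpow_neg_factoredNumbers s hσ)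
  calc (#T : ℝ) = ∑ _m ∈ T, (1 : ℝ) := by simp
    _ ≤ ∑ m ∈ T, x ^ σ * (m : ℝ) ^ (-σ) := sum_le_sum hterm
    _ = x ^ σ * ∑ m ∈ T, (m : ℝ) ^ (-σ) := (mul_sum ..).symm
    _ ≤ _ := by gcongr

end Nat

lemma one_sub_exp_neg_inv_le_exp_inv {t : ℝ} (ht : 0 < t) : (1 - exp (-t))⁻¹ ≤ exp t⁻¹ := by
  have ht' : t ≤ exp t - 1 := by linarith [add_one_le_exp t]
  have heq : (1 - exp (-t))⁻¹ = 1 + (exp t - 1)⁻¹ := by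
    have : exp t - 1 ≠ 0 := by linarith
    rw [exp_neg]
    field_simp
    ring
  calc (1 - exp (-t))⁻¹ = 1 + (exp t - 1)⁻¹ := heq
    _ ≤ 1 + t⁻¹ := by gcongr
    _ ≤ exp t⁻¹ := by linarith [add_one_le_exp t⁻¹]

lemma one_sub_rpow_neg_inv_le {p σ : ℝ} (hp : 1 < p) (hσ : 0 < σ) :
    (1 - p ^ (-σ))⁻¹ ≤ exp (σ * log p)⁻¹ := by
  have h := one_sub_exp_neg_inv_le_exp_inv (mul_pos hσ (log_pos hp))
  rwa [← neg_mul, mul_comm, ← rpow_def_of_pos (by linarith)] at h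

theorem prod_one_sub_rpow_neg_inv_le (s : Finset ℕ) {σ : ℝ} (hσ : 0 < σ) :
    ∏ p ∈ s with p.Prime, (1 - (p : ℝ) ^ (-σ))⁻¹ ≤
      exp (∑ p ∈ s with p.Prime, (σ * log p)⁻¹) := by
  rw [exp_sum]
  refine prod_le_prod (fun p hp ↦ ?_) (fun p hp ↦ ?_)
  all_goals have hp : 1 < (p : ℝ) := by exact_mod_cast (mem_filter.mp hp).2.one_lt
  · exact inv_nonneg.mpr (sub_nonneg.mpr (rpow_le_one_of_one_le_of_nonpos hp.le (by linarith)))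
  · exact one_sub_rpow_neg_inv_le hp hσ

lemma card_filter_natCast_le {P : Finset ℕ} (hP : 0 ∉ P) {E : ℝ} (hE : 0 ≤ E) :
    (#(P.filter fun n : ℕ ↦ (n : ℝ) ≤ E) : ℝ) ≤ E := by
  have hsub : (P.filter fun n : ℕ ↦ (n : ℝ) ≤ E) ⊆ Icc 1 ⌊E⌋₊ := fun n hn ↦ by
    obtain ⟨hnP, hnE⟩ := mem_filter.mp hn
    exact mem_Icc.mpr ⟨Nat.one_le_iff_ne_zero.mpr (ne_of_mem_of_not_mem hnP hP),
      Nat.le_floor hnE⟩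
  calc (#(P.filter fun n : ℕ ↦ (n : ℝ) ≤ E) : ℝ) ≤ #(Icc 1 ⌊E⌋₊) := by
        exact_mod_cast card_le_card hsub
    _ = ⌊E⌋₊ := by simp
    _ ≤ E := Nat.floor_le hE

lemma sum_div_log_le {P : Finset ℕ} (hP : ∀ p ∈ P, p.Prime) {l : ℝ} (hl : 0 < l) :
    ∑ p ∈ P, l / log p ≤ exp (l / 2) * (l / log 2) + 4 / l * ∑ p ∈ P, log p := by
  have hcard : (#(P.filter fun p : ℕ ↦ (p : ℝ) ≤ exp (l / 2)) : ℝ) ≤ exp (l / 2) :=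
    card_filter_natCast_le (fun h ↦ Nat.not_prime_zero (hP 0 h)) (exp_pos _).le
  have hterm : ∀ p ∈ P, l / log p ≤
      (if (p : ℝ) ≤ exp (l / 2) then l / log 2 else 0) + 4 / l * log p := fun p hp ↦ by
    have hp2 : (2 : ℝ) ≤ p := by exact_mod_cast (hP p hp).two_le
    have hlogp : 0 < log p := log_pos (by linarith)
    split_ifs with hpE
    · have : l / log p ≤ l / log 2 := by gcongr
      have : 0 ≤ 4 / l * log p := by positivity
      linarith
    · have hlp : l / 2 < log p := (lt_log_iff_exp_lt (by linarith)).mpr (not_le.mp hpE)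
      rw [zero_add, div_le_iff₀ hlogp, div_mul_eq_mul_div, div_mul_eq_mul_div, le_div_iff₀ hl]
      nlinarith
  calc ∑ p ∈ P, l / log p
      ≤ ∑ p ∈ P, ((if (p : ℝ) ≤ exp (l / 2) then l / log 2 else 0) + 4 / l * log p) :=
        sum_le_sum hterm
    _ = #(P.filter fun p : ℕ ↦ (p : ℝ) ≤ exp (l / 2)) * (l / log 2) +
          4 / l * ∑ p ∈ P, log p := by
        rw [sum_add_distrib, sum_ite, sum_const_zero, add_zero, sum_const, nsmul_eq_mul, mul_sum]
    _ ≤ _ := by gcongr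

lemma sq_mul_exp_half_le (l : ℝ) (hl : 0 ≤ l) : l ^ 2 * exp (l / 2) ≤ 16 * exp l := by
  have h : l ≤ 4 * exp (l / 4) := by linarith [add_one_le_exp (l / 4), exp_pos (l / 4)]
  have hsq : exp l = exp (l / 4) ^ 2 * exp (l / 2) := by
    rw [← exp_nat_mul, ← exp_add]; ring_nf
  calc l ^ 2 * exp (l / 2) ≤ (4 * exp (l / 4)) ^ 2 * exp (l / 2) := by gcongr
    _ = 16 * exp l := by rw [hsq]; ring

lemma sum_log_div_log_le {P : Finset ℕ} (hP : ∀ p ∈ P, p.Prime) {μ : ℝ} (hμ : 1 < μ)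
    (hPμ : ∑ p ∈ P, log p ≤ μ) : ∑ p ∈ P, log μ / log p ≤ 28 * μ / log μ := by
  set l := log μ
  have hl : 0 < l := log_pos hμ
  have hexp : exp l = μ := exp_log (by linarith)
  have hlog2 : 2 / 3 < log 2 := by linarith [log_two_gt_d9]
  have hsmall : exp (l / 2) * (l / log 2) ≤ 24 * μ / l := by
    have h := sq_mul_exp_half_le l hl.le
    rw [hexp] at h
    rw [le_div_iff₀ hl]
    calc exp (l / 2) * (l / log 2) * l = l ^ 2 * exp (l / 2) / log 2 := by ring
      _ ≤ 16 * μ / log 2 := by gcongr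
      _ ≤ 24 * μ := by rw [div_le_iff₀ (by linarith)]; nlinarith
  have hlarge : 4 / l * ∑ p ∈ P, log p ≤ 4 * μ / l := by
    rw [div_mul_eq_mul_div]; gcongr
  calc _ ≤ exp (l / 2) * (l / log 2) + 4 / l * ∑ p ∈ P, log p := sum_div_log_le hP hl
    _ ≤ 24 * μ / l + 4 * μ / l := add_le_add hsmall hlarge
    _ = 28 * μ / l := by ring

theorem card_factoredNumbers_primeFactors_le (x : ℕ) {y : ℕ} (hy : 1 < log y) :
    (#{m ∈ Iic x | m ∈ Nat.factoredNumbers y.primeFactors} : ℝ) ≤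
      x ^ (log (log y))⁻¹ * exp (28 * log y / log (log y)) := by
  have hσ : 0 < (log (log y))⁻¹ := inv_pos.mpr (log_pos hy)
  have hsum : ∑ p ∈ y.primeFactors with p.Prime, ((log (log y))⁻¹ * log p)⁻¹ ≤
      28 * log y / log (log y) := by
    rw [filter_true_of_mem fun p hp ↦ Nat.prime_of_mem_primeFactors hp]
    simp only [inv_mul_eq_div, inv_div]
    exact sum_log_div_log_le (fun p ↦ Nat.prime_of_mem_primeFactors) hy
      (Nat.sum_log_primeFactors_le y)
  refine (Nat.card_factoredNumbers_le _ hσ x).trans ?_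
  gcongr
  exact (prod_one_sub_rpow_neg_inv_le _ hσ).trans (exp_le_exp.mpr hsum)

theorem stmt7 : ∃ c : ℝ, 0 < c ∧
    ∀ x y : ℕ, 1 ≤ x → 3 ≤ y →
      (Nat.card {m : ℕ // 1 ≤ m ∧ m ≤ x ∧ ∀ p : ℕ, p.Prime → p ∣ m → p ∣ y} : ℝ)
        < Real.exp (c * Real.log (max x y : ℕ) / Real.log (Real.log y)) := by
  refine ⟨30, by norm_num, fun x y hx hy ↦ ?_⟩
  have hμ : 1 < log y := by
    rw [lt_log_iff_exp_lt (by positivity)]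
    have : (3 : ℝ) ≤ y := by exact_mod_cast hy
    linarith [exp_one_lt_d9]
  have hl : 0 < log (log y) := log_pos hμ
  have hyL : log y ≤ log (max x y : ℕ) :=
    log_le_log (by positivity) (by exact_mod_cast le_max_right x y)
  have hxL : log x ≤ log (max x y : ℕ) :=
    log_le_log (by positivity) (by exact_mod_cast le_max_left x y)
  rw [Nat.card_subtype_eq_card_filter_factoredNumbers x (by omega)]
  calc _ ≤ x ^ (log (log y))⁻¹ * exp (28 * log y / log (log y)) :=
        card_factoredNumbers_primeFactors_le x hμ
    _ = exp ((log x + 28 * log y) / log (log y)) := by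
        rw [rpow_def_of_pos (by positivity), ← exp_add, ← div_eq_mul_inv, add_div]
    _ < exp (30 * log (max x y : ℕ) / log (log y)) := by
        gcongr
        linarith
end

section
/- For any nonzero integers α, β, J, the set of pairs (x, y) of nonzero integers such that αx + βy = J and the pair (x, y) is multiplicatively dependent is finite. -/
/-!
A multiplicative dependence `x ^ k₁ * y ^ k₂ = 1` between integers forces `x ∣ y` or `y ∣ x`:
after making `k₁ ≥ 0`, either `x ^ a * y ^ b = 1`, so that `x` or `y` is a unit, or
`x ^ a = y ^ b`, and then `y ^ b = x ^ a ∣ x ^ b` (for `a ≤ b`) gives `y ∣ x`.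
If `y ∣ x` then `y ∣ α x + β y = J`, so `y` is one of the finitely many divisors of `J`,
and the line determines `x` from `y`.
-/

section DvdOfDependent

variable {R K : Type*} [CommRing R] [IsDomain R] [IsIntegrallyClosed R]

theorem dvd_or_dvd_of_pow_eq_pow {x y : R} {a b : ℕ}
    (hab : a ≠ 0 ∨ b ≠ 0) (h : x ^ a = y ^ b) : x ∣ y ∨ y ∣ x := by
  rcases le_total a b with hle | hle
  · have hb : b ≠ 0 := by omega
    exact .inr <| (IsIntegrallyClosed.pow_dvd_pow_iff hb).1 (h ▸ pow_dvd_pow x hle)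
  · have ha : a ≠ 0 := by omega
    exact .inl <| (IsIntegrallyClosed.pow_dvd_pow_iff ha).1 (h ▸ pow_dvd_pow y hle)

variable [Field K] [Algebra R K] [IsFractionRing R K]

theorem dvd_or_dvd_of_pow_mul_zpow_eq_one {x y : R} {a : ℕ} {k : ℤ}
    (hak : a ≠ 0 ∨ k ≠ 0) (h : algebraMap R K x ^ a * algebraMap R K y ^ k = 1) :
    x ∣ y ∨ y ∣ x := by
  have hinj := IsFractionRing.injective R K
  cases k with
  | ofNat b =>
    rw [Int.ofNat_eq_natCast, Nat.cast_ne_zero] at hak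
    rw [Int.ofNat_eq_natCast, zpow_natCast, ← map_pow, ← map_pow, ← map_mul,
      map_eq_one_iff _ hinj] at h
    rcases hak with ha | hb
    · exact .inl ((isUnit_pow_iff ha).1 (.of_mul_eq_one _ h)).dvd
    · exact .inr ((isUnit_pow_iff hb).1 (.of_mul_eq_one_right _ h)).dvd
  | negSucc b =>
    rw [zpow_negSucc] at h
    rw [mul_inv_eq_one₀ (by simpa using right_ne_zero_of_mul_eq_one h), ← map_pow,
      ← map_pow, hinj.eq_iff] at h
    exact dvd_or_dvd_of_pow_eq_pow (.inr b.succ_ne_zero) h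

theorem dvd_or_dvd_of_zpow_mul_zpow_eq_one {x y : R} {k₁ k₂ : ℤ}
    (hk : (k₁, k₂) ≠ (0, 0)) (h : algebraMap R K x ^ k₁ * algebraMap R K y ^ k₂ = 1) :
    x ∣ y ∨ y ∣ x := by
  obtain ⟨a, rfl | rfl⟩ := Int.eq_nat_or_neg k₁
  · rw [zpow_natCast] at h
    refine dvd_or_dvd_of_pow_mul_zpow_eq_one ?_ h
    contrapose! hk
    simpa using hk
  · have h' := congrArg (·⁻¹) h
    simp only [mul_inv, ← zpow_neg, neg_neg, zpow_natCast, inv_one] at h'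
    refine dvd_or_dvd_of_pow_mul_zpow_eq_one ?_ h'
    contrapose! hk
    simpa using hk

end DvdOfDependent

theorem Set.Finite.setOf_line_and_fst_or_snd_mem {R : Type*} [CommRing R] [IsDomain R]
    {α β : R} (J : R) (hα : α ≠ 0) (hβ : β ≠ 0) {S : Set R} (hS : S.Finite) :
    {p : R × R | α * p.1 + β * p.2 = J ∧ (p.1 ∈ S ∨ p.2 ∈ S)}.Finite := by
  have hfst : {p : R × R | α * p.1 + β * p.2 = J ∧ p.1 ∈ S}.Finite := by
    refine Set.Finite.of_finite_image (f := Prod.fst) (hS.subset ?_) ?_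
    · rintro _ ⟨p, ⟨-, hp⟩, rfl⟩
      exact hp
    · rintro ⟨x, y⟩ ⟨h, -⟩ ⟨x', y'⟩ ⟨h', -⟩ (rfl : x = x')
      simpa using mul_left_cancel₀ hβ (add_left_cancel (h.trans h'.symm))
  have hsnd : {p : R × R | α * p.1 + β * p.2 = J ∧ p.2 ∈ S}.Finite := by
    refine Set.Finite.of_finite_image (f := Prod.snd) (hS.subset ?_) ?_
    · rintro _ ⟨p, ⟨-, hp⟩, rfl⟩
      exact hp
    · rintro ⟨x, y⟩ ⟨h, -⟩ ⟨x', y'⟩ ⟨h', -⟩ (rfl : y = y')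
      simpa using mul_left_cancel₀ hα (add_right_cancel (h.trans h'.symm))
  refine (hfst.union hsnd).subset ?_
  rintro p ⟨hp, hS | hS⟩
  exacts [.inl ⟨hp, hS⟩, .inr ⟨hp, hS⟩]

theorem stmt8 (α β J : ℤ) (hα : α ≠ 0) (hβ : β ≠ 0) (hJ : J ≠ 0) :
    {p : ℤ × ℤ | p.1 ≠ 0 ∧ p.2 ≠ 0 ∧ α * p.1 + β * p.2 = J ∧
      ∃ k₁ k₂ : ℤ, (k₁, k₂) ≠ (0, 0) ∧ (p.1 : ℚ) ^ k₁ * (p.2 : ℚ) ^ k₂ = 1}.Finite := by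
  refine ((Int.divisors J).finite_toSet.setOf_line_and_fst_or_snd_mem J hα hβ).subset ?_
  rintro ⟨x, y⟩ ⟨-, -, hline, k₁, k₂, hk, hdep⟩
  refine ⟨hline, ?_⟩
  rcases dvd_or_dvd_of_zpow_mul_zpow_eq_one (x := x) (y := y) (K := ℚ) hk
    (by simpa using hdep) with hxy | hyx
  · exact .inl (Int.mem_divisors.2 ⟨hline ▸ dvd_add (dvd_mul_left x α) (hxy.mul_left β), hJ⟩)
  · exact .inr (Int.mem_divisors.2 ⟨hline ▸ dvd_add (hyx.mul_left α) (dvd_mul_left y β), hJ⟩)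
end

section
/- For every integer N > 16 that is not divisible by 6, there exist positive integers a < b < c with a + b + c = N and nonzero integers p, q, r such that a^p · b^q · c^r = 1, where the product is taken in ℚ with integer (possibly negative) exponents. -/
/-!
For `m ≥ 2`, `j ≥ 1` and `k > m ^ j` the triple `(m ^ j, k, m k)` is fatal, because
`m ^ j · k ^ j = (m k) ^ j`. Its sum `m ^ j + (m + 1) k` runs through all large `N ≡ m ^ j` modulo
`m + 1`. The choices `m ^ j = 2, 4` cover `N ≡ 2, 1 (mod 3)`; a multiple of `3` not divisible
by `6` is odd, so `m ^ j = 3, 9` cover the rest through `N ≡ 3, 1 (mod 4)`.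
The three values `21, 33, 45` too small for the last family are settled by explicit triples.
-/

def IsFatalTriple (a b c : ℕ) : Prop :=
  0 < a ∧ a < b ∧ b < c ∧
    ∃ p q r : ℤ, p ≠ 0 ∧ q ≠ 0 ∧ r ≠ 0 ∧ (a : ℚ) ^ p * (b : ℚ) ^ q * (c : ℚ) ^ r = 1

def IsFatal (N : ℕ) : Prop :=
  ∃ a b c : ℕ, IsFatalTriple a b c ∧ a + b + c = N

theorem isFatalTriple_pow_mul {m j k : ℕ} (hm : 2 ≤ m) (hj : j ≠ 0) (hk : m ^ j < k) :
    IsFatalTriple (m ^ j) k (m * k) := by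
  have hpos : 0 < m ^ j := by positivity
  refine ⟨hpos, hk, by nlinarith, 1, j, -j, one_ne_zero, by exact_mod_cast hj,
    by exact_mod_cast neg_ne_zero.mpr (Int.natCast_ne_zero.mpr hj), ?_⟩
  have hmk : (m : ℚ) * k ≠ 0 := by exact_mod_cast (Nat.mul_pos (by omega) (by omega)).ne'
  rw [zpow_one, zpow_neg, zpow_natCast, zpow_natCast]
  push_cast
  rw [mul_inv_eq_one₀ (pow_ne_zero _ hmk)]
  ring

theorem isFatal_of_mod_eq {m j N : ℕ} (hm : 2 ≤ m) (hj : j ≠ 0)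
    (hmod : N % (m + 1) = m ^ j % (m + 1)) (hN : m ^ j + (m + 1) * (m ^ j + 1) ≤ N) :
    IsFatal N := by
  obtain ⟨k, hk⟩ : (m + 1) ∣ N - m ^ j :=
    Nat.dvd_of_mod_eq_zero (Nat.sub_mod_eq_zero_of_mod_eq hmod)
  have hNk : N = m ^ j + (m + 1) * k := by omega
  have hjk : m ^ j < k := by
    by_contra! h
    nlinarith
  exact ⟨_, _, _, isFatalTriple_pow_mul hm hj hjk, by rw [hNk]; ring⟩

theorem isFatal_21 : IsFatal 21 :=
  ⟨1, 4, 16, ⟨by norm_num, by norm_num, by norm_num, 1, 2, -1, by norm_num⟩, rfl⟩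

theorem isFatal_33 : IsFatal 33 :=
  ⟨6, 9, 18, ⟨by norm_num, by norm_num, by norm_num, -2, -1, 2, by norm_num⟩, rfl⟩

theorem isFatal_45 : IsFatal 45 :=
  ⟨6, 12, 27, ⟨by norm_num, by norm_num, by norm_num, -6, 3, 1, by norm_num⟩, rfl⟩

theorem stmt19 (N : ℕ) (hN : 16 < N) (h6 : ¬ (6 ∣ N)) :
    ∃ a b c : ℕ, 0 < a ∧ a < b ∧ b < c ∧ a + b + c = N ∧
      ∃ p q r : ℤ, p ≠ 0 ∧ q ≠ 0 ∧ r ≠ 0 ∧ (a : ℚ) ^ p * (b : ℚ) ^ q * (c : ℚ) ^ r = 1 := by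
  suffices hfatal : IsFatal N by
    obtain ⟨a, b, c, ⟨ha, hab, hbc, hpqr⟩, hsum⟩ := hfatal
    exact ⟨a, b, c, ha, hab, hbc, hsum, hpqr⟩
  have hcases : N % 3 = 2 ∨ N % 3 = 1 ∨ N % 4 = 3 ∨ N ∈ ({21, 33, 45} : Finset ℕ) ∨
      (N % 4 = 1 ∧ 57 ≤ N) := by
    simp only [Finset.mem_insert, Finset.mem_singleton]
    omega
  rcases hcases with h | h | h | h | ⟨h, hlarge⟩
  · exact isFatal_of_mod_eq (m := 2) (j := 1) le_rfl one_ne_zero (by omega) (by omega)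
  · exact isFatal_of_mod_eq (m := 2) (j := 2) le_rfl two_ne_zero (by omega) (by omega)
  · exact isFatal_of_mod_eq (m := 3) (j := 1) (by norm_num) one_ne_zero (by omega) (by omega)
  · simp only [Finset.mem_insert, Finset.mem_singleton] at h
    rcases h with rfl | rfl | rfl
    exacts [isFatal_21, isFatal_33, isFatal_45]
  · exact isFatal_of_mod_eq (m := 3) (j := 2) (by norm_num) two_ne_zero (by omega) (by omega)
end
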